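/- Let P be a datalog program with a finite least model and let ⟨P⟩ be its translation to a finite-choice logic program (each rule p(t̄) ← p₁(t̄₁),...,pₙ(t̄ₙ) becomes p(t̄) is {unit} ← p₁(t̄₁) is unit, ..., pₙ(t̄ₙ) is unit, for a fresh constant unit). Then ⟨P⟩ has a unique solution D, and the least model of P equals { p(t̄) : (p(t̄) is unit) ∈ D }. -/

import Mathlib

open scoped Classical

namespace FCLP

/-! ### Terms -/

/-- Ground (Herbrand) terms: uninterpreted function symbols applied to ground terms. -/
inductive GTerm : Type where
  | func : ℕ → List GTerm → GTerm

/-- Terms possibly containing variables. -/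
inductive VTerm : Type where
  | var : ℕ → VTerm
  | func : ℕ → List VTerm → VTerm

/-- A substitution is a total map from variables to ground terms. -/
abbrev Subst := ℕ → GTerm

mutual
  /-- Applying a substitution to a term. -/
  def VTerm.subst (σ : Subst) : VTerm → GTerm
    | .var x => σ x
    | .func f args => .func f (VTerm.substList σ args)
  def VTerm.substList (σ : Subst) : List VTerm → List GTerm
    | [] => []
    | t :: ts => VTerm.subst σ t :: VTerm.substList σ ts
end

/-- The variable `x` occurs in the term. -/
inductive VTerm.HasVar : VTerm → ℕ → Prop where
  | var (x : ℕ) : VTerm.HasVar (.var x) x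
  | func {f : ℕ} {args : List VTerm} {t : VTerm} {x : ℕ} :
      t ∈ args → VTerm.HasVar t x → VTerm.HasVar (.func f args) x

/-! ### Attributes, facts, rules, programs -/

/-- An attribute `p(t₁,...,tₙ)`: a predicate applied to ground terms. -/
structure Attr where
  pred : ℕ
  args : List GTerm

/-- A fact `p(t̄) is v`. -/
structure Fact where
  attr : Attr
  value : GTerm

/-- A premise `p(t̄) is v`, possibly containing variables. -/
structure VAtom where
  pred : ℕ
  args : List VTerm
  value : VTerm

def VAtom.subst (σ : Subst) (A : VAtom) : Fact :=
  ⟨⟨A.pred, A.args.map (VTerm.subst σ)⟩, A.value.subst σ⟩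

def VAtom.HasVar (A : VAtom) (x : ℕ) : Prop :=
  (∃ t ∈ A.args, t.HasVar x) ∨ A.value.HasVar x

/-- A rule head: open `p(t̄) is? v` or closed `p(t̄) is {v₁,...,vₘ}`. -/
inductive Head : Type where
  | opn : ℕ → List VTerm → VTerm → Head
  | closed : ℕ → List VTerm → List VTerm → Head

def Head.HasVar : Head → ℕ → Prop
  | .opn _ args v, x => (∃ t ∈ args, t.HasVar x) ∨ v.HasVar x
  | .closed _ args vs, x => (∃ t ∈ args, t.HasVar x) ∨ ∃ v ∈ vs, v.HasVar x

/-- The ground attribute of a rule head under a substitution. -/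
def Head.groundAttr (σ : Subst) : Head → Attr
  | .opn p args _ => ⟨p, args.map (VTerm.subst σ)⟩
  | .closed p args _ => ⟨p, args.map (VTerm.subst σ)⟩

/-- A rule `H ← F` with a finite collection of premises. -/
structure Rule where
  head : Head
  prems : List VAtom

/-- Wellformedness: closed heads offer at least one value, and every
variable in the head occurs in a premise. -/
def Rule.WF (r : Rule) : Prop :=
  (∀ x, r.head.HasVar x → ∃ A ∈ r.prems, A.HasVar x) ∧
  (∀ p args vs, r.head = .closed p args vs → vs ≠ [])

/-- A program is a set of rules. -/
abbrev Program := Set Rule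

/-- A program is a *finite* set of *wellformed* rules. -/
def Program.WFP (P : Program) : Prop := P.Finite ∧ ∀ r ∈ P, r.WF

/-! ### Fact-set semantics -/

/-- A set of facts is consistent when each attribute has at most one value. -/
def Consistent (D : Set Fact) : Prop :=
  ∀ f ∈ D, ∀ g ∈ D, f.attr = g.attr → f = g

/-- `σ` satisfies the premises `F` in the fact-set database `D`. -/
def satF (σ : Subst) (F : List VAtom) (D : Set Fact) : Prop :=
  ∀ A ∈ F, A.subst σ ∈ D

/-- Fact-set evolution `D →_P S`. -/
inductive Evolve (P : Program) : Set Fact → Set (Set Fact) → Prop where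
  | triv (D : Set Fact) : Evolve P D {D}
  | closed {D : Set Fact} {r : Rule} {p : ℕ} {args vs : List VTerm} {σ : Subst} :
      r ∈ P → r.head = .closed p args vs → satF σ r.prems D →
      Evolve P D
        { E | ∃ v ∈ vs,
            E = insert (⟨⟨p, args.map (VTerm.subst σ)⟩, VTerm.subst σ v⟩ : Fact) D ∧
            Consistent E }
  | opn {D : Set Fact} {r : Rule} {p : ℕ} {args : List VTerm} {v : VTerm} {σ : Subst} :
      r ∈ P → r.head = .opn p args v → satF σ r.prems D →
      Evolve P D
        ({D} ∪ { E | E = insert (⟨⟨p, args.map (VTerm.subst σ)⟩, VTerm.subst σ v⟩ : Fact) D ∧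
                     Consistent E })

/-- `P` allows `D` to step to `D'`. -/
def Step (P : Program) (D D' : Set Fact) : Prop := ∃ S, Evolve P D S ∧ D' ∈ S

/-- A database is saturated when its only evolution is the singleton of itself. -/
def Saturated (P : Program) (D : Set Fact) : Prop := ∀ S, Evolve P D S → S = {D}

/-- A solution: a saturated database reachable from `∅` by a (finite) step sequence. -/
def Solution (P : Program) (D : Set Fact) : Prop :=
  Relation.ReflTransGen (Step P) ∅ D ∧ Saturated P D

/-! ### Constraints and constraint databases -/

/-- A constraint: `just t` or `noneOf X`. -/
inductive Constraint : Type where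
  | just : GTerm → Constraint
  | noneOf : Set GTerm → Constraint

/-- The order on constraints. -/
def Constraint.le : Constraint → Constraint → Prop
  | .noneOf X, .noneOf Y => X ⊆ Y
  | .noneOf X, .just t => t ∉ X
  | .just t, .just t' => t = t'
  | .just _, .noneOf _ => False

instance : LE Constraint := ⟨Constraint.le⟩

/-- Least upper bound of a (compatible) set of constraints: if some `just t` is present
it is the lub; otherwise it is `noneOf` of the union. -/
noncomputable def Constraint.lub (C : Set Constraint) : Constraint :=
  if h : ∃ t, Constraint.just t ∈ C then .just h.choose
  else .noneOf (⋃₀ { X | Constraint.noneOf X ∈ C })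

/-- A constraint database: a map from ground attributes to constraints,
ordered pointwise (via the `Pi` order). -/
abbrev CDB := Attr → Constraint

/-- The least constraint database: every attribute maps to `noneOf ∅`. -/
def cdbBot : CDB := fun _ => .noneOf ∅

/-- Pointwise least upper bound of a (compatible) set of constraint databases. -/
noncomputable def CDB.lub (S : Set CDB) : CDB :=
  fun a => Constraint.lub ((fun Δ => Δ a) '' S)

/-- A subset of a poset is compatible when it has an upper bound. -/
def Compatible {α : Type*} [LE α] (X : Set α) : Prop := ∃ y, ∀ x ∈ X, x ≤ y

/-- Binary compatibility. -/
def Compat {α : Type*} [LE α] (x y : α) : Prop := Compatible ({x, y} : Set α)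

/-- A choice set: a pairwise-incompatible set of constraint databases. -/
def IsChoiceSet (𝒞 : Set CDB) : Prop :=
  ∀ D ∈ 𝒞, ∀ E ∈ 𝒞, Compat D E → D = E

/-- The order on choice sets. -/
def ChoiceLE (𝒞₁ 𝒞₂ : Set CDB) : Prop :=
  ∀ D₂ ∈ 𝒞₂, ∃ D₁ ∈ 𝒞₁, D₁ ≤ D₂

/-- Least upper bound of an indexed family of choice sets:
`⋁ᵢ 𝒞ᵢ = { ⋁ Im(f) : f ∈ ∏ᵢ 𝒞ᵢ, Im(f) compatible }`. -/
noncomputable def ChoiceJoin {I : Type*} (𝒞 : I → Set CDB) : Set CDB :=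
  { E | ∃ f : I → CDB, (∀ i, f i ∈ 𝒞 i) ∧ Compatible (Set.range f) ∧
        E = CDB.lub (Set.range f) }

/-- Least upper bound of a set of choice sets. -/
noncomputable def ChoiceSJoin (S : Set (Set CDB)) : Set CDB :=
  ChoiceJoin (fun C : S => (C : Set CDB))

/-- Greatest lower bound of a set of choice sets:
`⋀ X = ⋁ {𝒞 : ∀ x ∈ X, 𝒞 ≤ x}` (join over choice-set lower bounds). -/
noncomputable def ChoiceMeet (S : Set (Set CDB)) : Set CDB :=
  ChoiceSJoin { C | IsChoiceSet C ∧ ∀ X ∈ S, ChoiceLE C X }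

/-! ### Immediate consequence -/

/-- `σ` satisfies `F` in the constraint database `Δ`. -/
def satC (σ : Subst) (F : List VAtom) (Δ : CDB) : Prop :=
  ∀ A ∈ F, Constraint.just (A.value.subst σ) ≤ Δ ⟨A.pred, A.args.map (VTerm.subst σ)⟩

/-- The constraint database mapping `a` to `c` and every other attribute to `noneOf ∅`. -/
noncomputable def unitCDB (a : Attr) (c : Constraint) : CDB :=
  fun a' => if a' = a then c else .noneOf ∅

/-- The choice set `⟨σH⟩` determined by a ground rule head. -/
noncomputable def headChoice (σ : Subst) : Head → Set CDB
  | .opn p args v =>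
      { unitCDB ⟨p, args.map (VTerm.subst σ)⟩ (.just (v.subst σ)),
        unitCDB ⟨p, args.map (VTerm.subst σ)⟩ (.noneOf {v.subst σ}) }
  | .closed p args vs =>
      { Δ | ∃ v ∈ vs, Δ = unitCDB ⟨p, args.map (VTerm.subst σ)⟩ (.just (v.subst σ)) }

/-- The immediate consequence operator
`T_P(Δ) = {Δ} ∨ ⋁{ ⟨σH⟩ : (H ← F) ∈ P, σ satisfies F in Δ }`. -/
noncomputable def TP (P : Program) (Δ : CDB) : Set CDB :=
  ChoiceSJoin
    (insert {Δ} { C | ∃ r ∈ P, ∃ σ : Subst, satC σ r.prems Δ ∧ C = headChoice σ r.head })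

/-- The attribute-specific immediate consequence operator `T_{P[a]}`. -/
noncomputable def TPa (P : Program) (a : Attr) (Δ : CDB) : Set CDB :=
  ChoiceSJoin
    { C | ∃ r ∈ P, ∃ σ : Subst, satC σ r.prems Δ ∧ r.head.groundAttr σ = a ∧
          C = headChoice σ r.head }

/-- The lifted immediate consequence operator `T_P*(𝒞) = ⋃_{Δ ∈ 𝒞} T_P(Δ)`. -/
noncomputable def TPs (P : Program) (𝒞 : Set CDB) : Set CDB :=
  { E | ∃ Δ ∈ 𝒞, E ∈ TP P Δ }

/-- The least fixed point of `T_P*`, defined à la Knaster–Tarski as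
`⋀ {𝒞 : T_P*(𝒞) ≤ 𝒞}`. -/
noncomputable def lfpTPs (P : Program) : Set CDB :=
  ChoiceMeet { C | IsChoiceSet C ∧ ChoiceLE (TPs P C) C }

/-! ### Positive and finite constraint databases, promotion and erasure -/

/-- A constraint database is positive when `noneOf X` only occurs with `X = ∅`. -/
def CDBPositive (Δ : CDB) : Prop := ∀ a X, Δ a = .noneOf X → X = ∅

/-- A constraint database is finite. -/
def CDBFinite (Δ : CDB) : Prop :=
  { a | Δ a ≠ .noneOf ∅ }.Finite ∧ ∀ a X, Δ a = .noneOf X → X.Finite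

/-- Promotion of a (consistent) fact set to a constraint database. -/
noncomputable def promote (D : Set Fact) : CDB :=
  fun a => if h : ∃ v, (⟨a, v⟩ : Fact) ∈ D then .just h.choose else .noneOf ∅

/-- Erasure of a constraint database to a fact set. -/
def eraseCDB (Δ : CDB) : Set Fact := { f | Δ f.attr = .just f.value }

/-! ### The abstract algorithm -/

/-- `P` allows `Δ` to take an algorithmic step to any `Δ' ∈ {Δ} ∨ T_{P[a]}(Δ)`
for some attribute `a`, provided `T_P(Δ) ≠ ∅`. -/
noncomputable def AlgStep (P : Program) (Δ Δ' : CDB) : Prop :=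
  TP P Δ ≠ ∅ ∧ ∃ a : Attr, Δ' ∈ ChoiceSJoin {({Δ} : Set CDB), TPa P a Δ}

/-! ### Datalog -/

/-- A datalog atom, possibly with variables. -/
structure DAtom where
  pred : ℕ
  args : List VTerm

/-- A ground datalog atom. -/
structure GAtom where
  pred : ℕ
  args : List GTerm

def DAtom.subst (σ : Subst) (A : DAtom) : GAtom := ⟨A.pred, A.args.map (VTerm.subst σ)⟩

/-- A datalog rule `p(t̄) ← p₁(t̄₁), ..., pₙ(t̄ₙ)`. -/
structure DRule where
  head : DAtom
  prems : List DAtom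

/-- Every variable of the head appears in a premise. -/
def DRule.WF (r : DRule) : Prop :=
  ∀ x, (∃ t ∈ r.head.args, t.HasVar x) → ∃ A ∈ r.prems, ∃ t ∈ A.args, t.HasVar x

/-- The datalog immediate consequence operator. -/
def dImmCons (P : Set DRule) (X : Set GAtom) : Set GAtom :=
  { g | ∃ r ∈ P, ∃ σ : Subst, (∀ A ∈ r.prems, A.subst σ ∈ X) ∧ g = r.head.subst σ }

/-- The least model of a datalog program: the least fixed point of `dImmCons`. -/
def dModel (P : Set DRule) : Set GAtom := ⋂₀ { X | dImmCons P X ⊆ X }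

/-- Translation of a datalog program to a finite-choice logic program, using the
constant with (fresh) function symbol `u` as the value `unit`. -/
def trDatalog (u : ℕ) (P : Set DRule) : Program :=
  { r | ∃ dr ∈ P,
      r = ⟨Head.closed dr.head.pred dr.head.args [VTerm.func u []],
           dr.prems.map (fun A => ⟨A.pred, A.args, VTerm.func u []⟩)⟩ }

/-! ### Answer set programming -/

/-- A ground ASP rule `p ← p₁,...,pₙ, ¬q₁,...,¬qₘ` over propositional atoms. -/
structure ASPRule where
  head : ℕ
  pos : List ℕ
  neg : List ℕ

/-- One step of the immediate consequence operator of the reduct `P^X`. -/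
def reductCons (P : Set ASPRule) (X : Set ℕ) (Y : Set ℕ) : Set ℕ :=
  { p | ∃ r ∈ P, r.head = p ∧ (∀ q ∈ r.pos, q ∈ Y) ∧ (∀ q ∈ r.neg, q ∉ X) }

/-- The least model of the reduct `P^X`. -/
def reductModel (P : Set ASPRule) (X : Set ℕ) : Set ℕ :=
  ⋂₀ { Y | reductCons P X Y ⊆ Y }

/-- `X` is a stable model of `P` when the least model of the reduct `P^X` equals `X`. -/
def StableModel (P : Set ASPRule) (X : Set ℕ) : Prop := reductModel P X = X

/-- The fresh constant `tt` (as a ground term). -/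
def ttT : GTerm := .func 0 []
/-- The fresh constant `ff` (as a ground term). -/
def ffT : GTerm := .func 1 []
/-- The constant `tt` as a (closed) term of the rule language. -/
def ttV : VTerm := .func 0 []
/-- The constant `ff` as a (closed) term of the rule language. -/
def ffV : VTerm := .func 1 []

/-- The premise `p is tt`. -/
def posPrem (p : ℕ) : VAtom := ⟨p, [], ttV⟩
/-- The premise `q is ff`. -/
def negPrem (q : ℕ) : VAtom := ⟨q, [], ffV⟩

/-- Translation of an ASP program to a finite-choice logic program: each rule
`p ← p₁,...,pₙ, ¬q₁,...,¬qₘ` becomes `m` open rules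
`qⱼ is? ff ← p₁ is tt,...,pₙ is tt, q₁ is ff,...,q_{j-1} is ff` and one closed rule
`p is {tt} ← p₁ is tt,...,pₙ is tt, q₁ is ff,...,qₘ is ff`. -/
def trASP (P : Set ASPRule) : Program :=
  { r | ∃ ar ∈ P,
      (∃ j : Fin ar.neg.length,
        r = ⟨Head.opn (ar.neg.get j) [] ffV,
             ar.pos.map posPrem ++ (ar.neg.take j.val).map negPrem⟩) ∨
      r = ⟨Head.closed ar.head [] [ttV],
           ar.pos.map posPrem ++ ar.neg.map negPrem⟩ }

/-!
Since every translated rule is closed with the single value `unit`, firing it just adds the fact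
`p(t̄) is unit` for the head atom, and such a fact never conflicts with another one. So the reachable
databases are the encodings of sets of derivable atoms, which all lie in the least model `M`;
saturation is closure under the immediate consequence operator, hence forces a solution to contain
the encoding of `M`. Conversely, finiteness of `M` lets us add its atoms one at a time.
-/

section LeastModel

def dImmConsHom (P : Set DRule) : Set GAtom →o Set GAtom where
  toFun := dImmCons P
  monotone' := by
    rintro X Y hXY g ⟨r, hr, σ, hprems, rfl⟩
    exact ⟨r, hr, σ, fun A hA => hXY (hprems A hA), rfl⟩

-- `dModel P` is definitionally `OrderHom.lfp (dImmConsHom P)`.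

lemma dModel_subset {P : Set DRule} {X : Set GAtom} (h : dImmCons P X ⊆ X) :
    dModel P ⊆ X :=
  OrderHom.lfp_le (dImmConsHom P) h

lemma dImmCons_dModel (P : Set DRule) : dImmCons P (dModel P) = dModel P :=
  OrderHom.map_lfp (dImmConsHom P)

lemma head_mem_of_prems_mem {P : Set DRule} {X : Set GAtom} (hX : dImmCons P X ⊆ X)
    {dr : DRule} (hdr : dr ∈ P) {σ : Subst} (hprems : ∀ A ∈ dr.prems, A.subst σ ∈ X) :
    dr.head.subst σ ∈ X :=
  hX ⟨dr, hdr, σ, hprems, rfl⟩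

end LeastModel

section Encoding

variable (u : ℕ)

def unitFact (g : GAtom) : Fact := ⟨⟨g.pred, g.args⟩, GTerm.func u []⟩

lemma unitFact_injective : Function.Injective (unitFact u) := by
  rintro ⟨p, ts⟩ ⟨q, ss⟩ h
  simp_all [unitFact]

lemma consistent_of_subset_range {D : Set Fact} (hD : D ⊆ Set.range (unitFact u)) :
    Consistent D := by
  intro f hf g hg hattr
  obtain ⟨a, rfl⟩ := hD hf
  obtain ⟨b, rfl⟩ := hD hg
  simpa [unitFact] using hattr

end Encoding

section Translation

variable {u : ℕ} {P : Set DRule} {D : Set Fact}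

def fireSet (f : Fact) (D : Set Fact) : Set (Set Fact) := { E | E = insert f D ∧ Consistent E }

lemma evolve_trDatalog_iff {S : Set (Set Fact)} :
    Evolve (trDatalog u P) D S ↔ S = {D} ∨ ∃ dr ∈ P, ∃ σ : Subst,
      (∀ A ∈ dr.prems, unitFact u (A.subst σ) ∈ D) ∧
        S = fireSet (unitFact u (dr.head.subst σ)) D := by
  have hprems (dr : DRule) (σ : Subst) :
      satF σ (dr.prems.map fun A => ⟨A.pred, A.args, VTerm.func u []⟩) D ↔
        ∀ A ∈ dr.prems, unitFact u (A.subst σ) ∈ D := by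
    simp only [satF, List.forall_mem_map]
    rfl
  have hfire (dr : DRule) (σ : Subst) :
      { E | ∃ v ∈ [VTerm.func u []],
          E = insert
              (⟨⟨dr.head.pred, dr.head.args.map (VTerm.subst σ)⟩, VTerm.subst σ v⟩ : Fact) D ∧
            Consistent E } = fireSet (unitFact u (dr.head.subst σ)) D := by
    simp only [List.mem_singleton, exists_eq_left]
    rfl
  constructor
  · rintro (_ | ⟨⟨dr, hdr, rfl⟩, hhead, hsat⟩ | ⟨⟨dr, hdr, rfl⟩, hhead, -⟩)
    · exact .inl rfl
    · cases hhead
      exact .inr ⟨dr, hdr, _, (hprems dr _).1 hsat, hfire dr _⟩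
    · cases hhead
  · rintro (rfl | ⟨dr, hdr, σ, hsat, rfl⟩)
    · exact .triv D
    · rw [← hfire]
      exact .closed ⟨dr, hdr, rfl⟩ rfl ((hprems dr σ).2 hsat)

end Translation

section Solutions

variable {u : ℕ} {P : Set DRule} {D : Set Fact}

lemma prems_mem_of_mem_image {X : Set GAtom} {F : List DAtom} {σ : Subst}
    (h : ∀ A ∈ F, unitFact u (A.subst σ) ∈ unitFact u '' X) : ∀ A ∈ F, A.subst σ ∈ X :=
  fun A hA => (unitFact_injective u).mem_set_image.1 (h A hA)

lemma subset_image_dModel_of_reachable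
    (h : Relation.ReflTransGen (Step (trDatalog u P)) ∅ D) : D ⊆ unitFact u '' dModel P := by
  induction h with
  | refl => exact Set.empty_subset _
  | tail _ hstep ih =>
    obtain ⟨S, hS, hmem⟩ := hstep
    rcases evolve_trDatalog_iff.1 hS with rfl | ⟨dr, hdr, σ, hprems, rfl⟩
    · rwa [Set.mem_singleton_iff.1 hmem]
    · obtain ⟨rfl, -⟩ := hmem
      refine Set.insert_subset (Set.mem_image_of_mem _ ?_) ih
      exact head_mem_of_prems_mem (dImmCons_dModel P).le hdr
        (prems_mem_of_mem_image fun A hA => ih (hprems A hA))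

lemma saturated_image_of_closed {X : Set GAtom} (hX : dImmCons P X ⊆ X) :
    Saturated (trDatalog u P) (unitFact u '' X) := by
  intro S hS
  rcases evolve_trDatalog_iff.1 hS with rfl | ⟨dr, hdr, σ, hprems, rfl⟩
  · rfl
  · have hhead : unitFact u (dr.head.subst σ) ∈ unitFact u '' X :=
      Set.mem_image_of_mem _ (head_mem_of_prems_mem hX hdr (prems_mem_of_mem_image hprems))
    ext E
    simp only [fireSet, Set.insert_eq_of_mem hhead, Set.mem_ofPred_eq, Set.mem_singleton_iff,
      and_iff_left_iff_imp]
    rintro rfl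
    exact consistent_of_subset_range u (Set.image_subset_range _ _)

lemma dImmCons_preimage_subset_of_saturated (hD : Saturated (trDatalog u P) D)
    (hrange : D ⊆ Set.range (unitFact u)) :
    dImmCons P (unitFact u ⁻¹' D) ⊆ unitFact u ⁻¹' D := by
  rintro _ ⟨dr, hdr, σ, hprems, rfl⟩
  have hfire : insert (unitFact u (dr.head.subst σ)) D ∈
      fireSet (unitFact u (dr.head.subst σ)) D :=
    ⟨rfl, consistent_of_subset_range u (Set.insert_subset (Set.mem_range_self _) hrange)⟩
  rw [hD _ (evolve_trDatalog_iff.2 (.inr ⟨dr, hdr, σ, hprems, rfl⟩))] at hfire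
  show unitFact u (dr.head.subst σ) ∈ D
  exact Set.insert_eq_self.1 (Set.mem_singleton_iff.1 hfire)

lemma eq_image_dModel_of_solution (hD : Solution (trDatalog u P) D) :
    D = unitFact u '' dModel P := by
  have hsub := subset_image_dModel_of_reachable hD.1
  refine hsub.antisymm (Set.image_subset_iff.2 (dModel_subset ?_))
  exact dImmCons_preimage_subset_of_saturated hD.2 (hsub.trans (Set.image_subset_range _ _))

lemma reachable_image_dModel (hmod : (dModel P).Finite) {X : Set GAtom} (hX : X ⊆ dModel P) :
    Relation.ReflTransGen (Step (trDatalog u P)) (unitFact u '' X) (unitFact u '' dModel P) := by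
  by_cases hclosed : dImmCons P X ⊆ X
  · rw [hX.antisymm (dModel_subset hclosed)]
  · obtain ⟨_, ⟨dr, hdr, σ, hprems, rfl⟩, hnew⟩ := Set.not_subset.1 hclosed
    have hM : dr.head.subst σ ∈ dModel P :=
      head_mem_of_prems_mem (dImmCons_dModel P).le hdr fun A hA => hX (hprems A hA)
    have hstep : Step (trDatalog u P) (unitFact u '' X)
        (unitFact u '' insert (dr.head.subst σ) X) := by
      refine ⟨_, evolve_trDatalog_iff.2
        (.inr ⟨dr, hdr, σ, fun A hA => Set.mem_image_of_mem _ (hprems A hA), rfl⟩), ?_,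
        consistent_of_subset_range u (Set.image_subset_range _ _)⟩
      rw [Set.image_insert_eq]
    exact .head hstep (reachable_image_dModel hmod (Set.insert_subset hM hX))
termination_by (dModel P \ X).ncard
decreasing_by
  exact Set.ncard_lt_ncard ⟨Set.sdiff_subset_sdiff_right (Set.subset_insert _ _),
    fun h => (h ⟨hM, hnew⟩).2 (Set.mem_insert _ _)⟩ hmod.sdiff

end Solutions

/-- Correctness of the datalog translation: the translated finite-choice logic
program has a unique solution `D`, and the least model of `P` consists of exactly
the atoms mapped to `unit` in `D`. -/
theorem datalog_translation_correct (P : Set DRule) (hfin : P.Finite)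
    (hwf : ∀ r ∈ P, r.WF) (hmod : (dModel P).Finite) (u : ℕ) :
    ∃ D : Set Fact, Solution (trDatalog u P) D ∧
      (∀ D' : Set Fact, Solution (trDatalog u P) D' → D' = D) ∧
      dModel P = { g : GAtom | (⟨⟨g.pred, g.args⟩, GTerm.func u []⟩ : Fact) ∈ D } := by
  refine ⟨unitFact u '' dModel P, ⟨?_, saturated_image_of_closed (dImmCons_dModel P).le⟩,
    fun D' hD' => eq_image_dModel_of_solution hD', ?_⟩
  · simpa using reachable_image_dModel (u := u) hmod (Set.empty_subset _)
  · exact ((unitFact_injective u).preimage_image _).symm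

end FCLP
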